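/- arXiv:1812.06635 — 3 statements merged into one kernel-verified Lean document; each statement's English description precedes it below -/
import Mathlib

section
/- (Stable screening, ball-zone version.) Let A ∈ ℝ^{N×K} with columns a_1, …, a_K, y ∈ ℝ^N, λ > 0, and let x* ∈ ℝ^K minimize the Lasso primal objective P(x|A) over ℝ^K; set θ* = (y − Ax*)/λ. Let p, q ∈ [1, ∞] with conjugate exponents p*, q*, let c ∈ ℝ^N, R ≥ 0 with θ* ∈ B_p(c, R). Let ã_j ∈ ℝ^N and ε ≥ ‖ã_j − a_j‖_q for some index j. If |ã_jᵀc| + ε‖c‖_{q*} + R‖ã_j‖_{p*} + C_{p,q} R ε < 1, where C_{p,q} = N^{(1 − 1/p − 1/q)₊}, then x*(j) = 0. -/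
/-!
If `x*(j) ≠ 0`, the Lasso objective is differentiable along the `j`-th coordinate at `x*`,
and stationarity gives `a_jᵀ(y − Ax*) = λ sign x*(j)`, i.e. `|a_jᵀθ*| = 1`. On the other hand,
writing `a_j = ã_j − e` and `θ* = c + d` with `‖e‖_q ≤ ε`, `‖d‖_p ≤ R`, Hölder's inequality bounds
`|a_jᵀθ*|` by the left-hand side of the screening test; the cross term `eᵀd` needs in addition
the comparison `‖d‖_{q*} ≤ N^{(1/q* − 1/p)₊} ‖d‖_p` between ℓp-norms on `ℝ^N`.
-/

open scoped ENNReal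
open Matrix

/-- The ℓp-norm on ℝ^N for `p ∈ [1, ∞]` (given as `p : ℝ≥0∞`). -/
noncomputable def lpNorm {N : ℕ} (p : ℝ≥0∞) (v : Fin N → ℝ) : ℝ :=
  if p = ∞ then ⨆ i, |v i| else (∑ i, |v i| ^ p.toReal) ^ (1 / p.toReal)

/-- The Lasso primal objective `P(x|A) = ½‖Ax − y‖₂² + λ‖x‖₁`. -/
noncomputable def lassoPrimal {N K : ℕ} (A : Matrix (Fin N) (Fin K) ℝ)
    (y : Fin N → ℝ) (lam : ℝ) (x : Fin K → ℝ) : ℝ :=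
  (1 / 2) * (lpNorm 2 (A *ᵥ x - y)) ^ 2 + lam * lpNorm 1 x

/-- The Lasso dual objective `D(θ) = ½‖y‖₂² − (λ²/2)‖θ − y/λ‖₂²`. -/
noncomputable def lassoDual {N : ℕ} (y : Fin N → ℝ) (lam : ℝ)
    (θ : Fin N → ℝ) : ℝ :=
  (1 / 2) * (lpNorm 2 y) ^ 2 - (lam ^ 2 / 2) * (lpNorm 2 (θ - lam⁻¹ • y)) ^ 2

open MeasureTheory hiding lpNorm

lemma eLpNorm_count_ne_top {N : ℕ} (p : ℝ≥0∞) (v : Fin N → ℝ) : eLpNorm v p .count ≠ ∞ :=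
  (eLpNorm_count_lt_top_of_lt fun _ => enorm_lt_top).ne

namespace lpNorm

variable {N : ℕ} {p q : ℝ≥0∞}

lemma nonneg (p : ℝ≥0∞) (v : Fin N → ℝ) : 0 ≤ lpNorm p v := by
  unfold lpNorm
  split_ifs
  exacts [Real.iSup_nonneg fun i => abs_nonneg _, by positivity]

lemma one_eq_sum_abs (v : Fin N → ℝ) : lpNorm 1 v = ∑ i, |v i| := by
  simp [lpNorm]

lemma two_sq_eq_dotProduct (v : Fin N → ℝ) : lpNorm 2 v ^ 2 = v ⬝ᵥ v := by
  rw [lpNorm, if_neg ENNReal.ofNat_ne_top, ENNReal.toReal_ofNat, ← Real.sqrt_eq_rpow,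
    Real.sq_sqrt (by positivity)]
  simp [dotProduct, sq]

lemma eq_toReal_eLpNorm (hp : p ≠ 0) (v : Fin N → ℝ) :
    lpNorm p v = (eLpNorm v p .count).toReal := by
  rcases eq_or_ne p ∞ with rfl | hp_top
  · simp [lpNorm, eLpNorm_exponent_top, ENNReal.toReal_iSup fun _ => enorm_ne_top]
  · rw [lpNorm, if_neg hp_top, eLpNorm_eq_lintegral_rpow_enorm_toReal hp hp_top, lintegral_count,
      tsum_fintype, ← ENNReal.toReal_rpow, ENNReal.toReal_sum fun _ _ => by finiteness]
    simp [← ENNReal.toReal_rpow]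

lemma abs_apply_le (hp : p ≠ 0) (v : Fin N → ℝ) (i : Fin N) : |v i| ≤ lpNorm p v := by
  rw [eq_toReal_eLpNorm hp, ← Real.norm_eq_abs, ← toReal_enorm]
  exact ENNReal.toReal_mono (eLpNorm_count_ne_top _ _) (enorm_le_eLpNorm_count v i hp)

lemma abs_dotProduct_le [p.HolderConjugate q] (u v : Fin N → ℝ) :
    |u ⬝ᵥ v| ≤ lpNorm p u * lpNorm q v := by
  have holder : eLpNorm (u • v) 1 .count ≤ eLpNorm u p .count * eLpNorm v q .count :=
    eLpNorm_smul_le_mul_eLpNorm .of_discrete .of_discrete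
  calc |u ⬝ᵥ v| ≤ ∑ i, |u i * v i| := Finset.abs_sum_le_sum_abs _ _
    _ = lpNorm 1 (u • v) := by simp [one_eq_sum_abs]
    _ ≤ lpNorm p u * lpNorm q v := by
      rw [eq_toReal_eLpNorm one_ne_zero, eq_toReal_eLpNorm (ENNReal.HolderConjugate.ne_zero p q),
        eq_toReal_eLpNorm (ENNReal.HolderConjugate.ne_zero q p), ← ENNReal.toReal_mul]
      exact ENNReal.toReal_mono
        (ENNReal.mul_ne_top (eLpNorm_count_ne_top _ _) (eLpNorm_count_ne_top _ _)) holder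

lemma le_of_exponent_ge (hp : p ≠ 0) (hpq : p ≤ q) (v : Fin N → ℝ) :
    lpNorm q v ≤ lpNorm p v := by
  set M := lpNorm p v with hM_def
  have hM : ∀ i, |v i| ≤ M := abs_apply_le hp v
  rcases eq_or_ne q ∞ with rfl | hq_top
  · rw [lpNorm, if_pos rfl]
    exact Real.iSup_le hM (nonneg p v)
  have hp_top : p ≠ ∞ := ne_top_of_le_ne_top hq_top hpq
  set r := p.toReal
  set s := q.toReal
  have hr : 0 < r := ENNReal.toReal_pos hp hp_top
  have hrs : r ≤ s := ENNReal.toReal_mono hq_top hpq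
  have hM_pow : M ^ r = ∑ i, |v i| ^ r := by
    rw [hM_def, lpNorm, if_neg hp_top, one_div, Real.rpow_inv_rpow (by positivity) hr.ne']
  have hsum : ∑ i, |v i| ^ s ≤ M ^ s := calc
    ∑ i, |v i| ^ s = ∑ i, |v i| ^ r * |v i| ^ (s - r) := by
      congr! 1 with i
      rw [← Real.rpow_add' (abs_nonneg _) (by linarith), add_sub_cancel]
    _ ≤ ∑ i, |v i| ^ r * M ^ (s - r) := by
      gcongr with i
      exact hM i
    _ = M ^ s := by
      rw [← Finset.sum_mul, ← hM_pow, ← Real.rpow_add' (nonneg p v) (by linarith), add_sub_cancel]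
  rw [lpNorm, if_neg hq_top]
  calc (∑ i, |v i| ^ s) ^ (1 / s) ≤ (M ^ s) ^ (1 / s) := by gcongr
    _ = M := by rw [one_div, Real.rpow_rpow_inv (nonneg p v) (by linarith)]

lemma le_card_rpow_mul (hp : p ≠ 0) (hq : q ≠ 0) (v : Fin N → ℝ) :
    lpNorm p v ≤ (N : ℝ) ^ max (p⁻¹.toReal - q⁻¹.toReal) 0 * lpNorm q v := by
  rcases le_total p q with hpq | hqp
  · have hexp : 0 ≤ p⁻¹.toReal - q⁻¹.toReal :=
      sub_nonneg.mpr (ENNReal.toReal_mono (ENNReal.inv_ne_top.mpr hp) (ENNReal.inv_le_inv.mpr hpq))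
    have hcard : Measure.count (Set.univ : Set (Fin N)) = N := by simp [Measure.count_univ]
    have hcmp := eLpNorm_le_eLpNorm_mul_rpow_measure_univ hpq (μ := .count) (f := v) .of_discrete
    rw [hcard, one_div, one_div, ← ENNReal.toReal_inv, ← ENNReal.toReal_inv] at hcmp
    rw [max_eq_left hexp, eq_toReal_eLpNorm hp, eq_toReal_eLpNorm hq, mul_comm]
    refine (ENNReal.toReal_mono ?_ hcmp).trans_eq ?_
    · exact ENNReal.mul_ne_top (eLpNorm_count_ne_top _ _)
        (ENNReal.rpow_ne_top_of_nonneg hexp (ENNReal.natCast_ne_top N))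
    · rw [ENNReal.toReal_mul, ← ENNReal.toReal_rpow, ENNReal.toReal_natCast]
  · have hexp : p⁻¹.toReal - q⁻¹.toReal ≤ 0 :=
      sub_nonpos.mpr (ENNReal.toReal_mono (ENNReal.inv_ne_top.mpr hq) (ENNReal.inv_le_inv.mpr hqp))
    rw [max_eq_right hexp, Real.rpow_zero, one_mul]
    exact le_of_exponent_ge hq hqp v

end lpNorm

section Lasso

variable {N K : ℕ}

lemma lassoPrimal_add_single (A : Matrix (Fin N) (Fin K) ℝ) (y : Fin N → ℝ) (lam : ℝ)
    (x : Fin K → ℝ) (j : Fin K) (t : ℝ) :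
    lassoPrimal A y lam (x + Pi.single j t) = lassoPrimal A y lam x
      + t * (A.col j ⬝ᵥ (A *ᵥ x - y)) + t ^ 2 / 2 * (A.col j ⬝ᵥ A.col j)
      + lam * (|x j + t| - |x j|) := by
  have hres : A *ᵥ (x + Pi.single j t) - y = (A *ᵥ x - y) + t • A.col j := by
    rw [mulVec_add, mulVec_single, op_smul_eq_smul]
    abel
  have habs : ∑ k, |(x + Pi.single j t : Fin K → ℝ) k| = ∑ k, |x k| + (|x j + t| - |x j|) := by
    rw [← sub_eq_iff_eq_add', ← Finset.sum_sub_distrib, Finset.sum_eq_single j]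
    · simp
    · intro k _ hk
      simp [hk]
    · simp
  simp only [lassoPrimal, lpNorm.two_sq_eq_dotProduct, lpNorm.one_eq_sum_abs, hres, habs]
  simp only [dotProduct_add, add_dotProduct, dotProduct_smul, smul_dotProduct, smul_eq_mul,
    dotProduct_comm (A.col j)]
  ring

theorem col_dotProduct_residual_eq_of_isMinimizer {A : Matrix (Fin N) (Fin K) ℝ}
    {y : Fin N → ℝ} {lam : ℝ} {xstar : Fin K → ℝ}
    (hmin : ∀ x, lassoPrimal A y lam xstar ≤ lassoPrimal A y lam x)
    {j : Fin K} (hj : xstar j ≠ 0) :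
    A.col j ⬝ᵥ (y - A *ᵥ xstar) = lam * SignType.sign (xstar j) := by
  set g : ℝ → ℝ := fun t => lassoPrimal A y lam (xstar + Pi.single j t)
  have hg_min : IsLocalMin g 0 := .of_forall fun t => by simpa [g] using hmin _
  have habs : HasDerivAt (fun t => |xstar j + t|) (SignType.sign (xstar j)) 0 := by
    simpa using (hasDerivAt_abs (x := xstar j + 0) (by simpa using hj)).comp_const_add (xstar j) 0
  have hlin : HasDerivAt (fun t : ℝ => t * (A.col j ⬝ᵥ (A *ᵥ xstar - y)))
      (A.col j ⬝ᵥ (A *ᵥ xstar - y)) 0 := by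
    simpa using (hasDerivAt_id (0 : ℝ)).mul_const (A.col j ⬝ᵥ (A *ᵥ xstar - y))
  have hquad : HasDerivAt (fun t : ℝ => t ^ 2 / 2 * (A.col j ⬝ᵥ A.col j)) 0 0 := by
    simpa using ((hasDerivAt_pow 2 (0 : ℝ)).div_const 2).mul_const (A.col j ⬝ᵥ A.col j)
  have hg_deriv : HasDerivAt g
      (A.col j ⬝ᵥ (A *ᵥ xstar - y) + lam * SignType.sign (xstar j)) 0 := by
    simp only [g, lassoPrimal_add_single]
    simpa using
      ((hlin.const_add _).fun_add hquad).fun_add ((habs.sub_const |xstar j|).const_mul lam)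
  have := hg_min.hasDerivAt_eq_zero hg_deriv
  rw [← neg_sub, dotProduct_neg]
  linarith

end Lasso

lemma ENNReal.HolderConjugate.of_one_div_add_one_div {p q : ℝ≥0∞} (h : 1 / p + 1 / q = 1) :
    p.HolderConjugate q :=
  ENNReal.holderConjugate_iff.mpr (by simpa only [one_div] using h)

lemma ENNReal.HolderConjugate.toReal_inv_eq_one_sub (p q : ℝ≥0∞) [p.HolderConjugate q] :
    q⁻¹.toReal = 1 - p⁻¹.toReal := by
  rw [← ENNReal.HolderConjugate.one_sub_inv p q, ENNReal.toReal_sub_of_le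
    (ENNReal.inv_le_one.mpr (ENNReal.HolderConjugate.one_le p q)) ENNReal.one_ne_top,
    ENNReal.toReal_one]

theorem abs_dotProduct_le_of_lpNorm_sub_le {N : ℕ} {p pstar q qstar : ℝ≥0∞}
    [p.HolderConjugate pstar] [q.HolderConjugate qstar] {a atil θ c : Fin N → ℝ} {R ε : ℝ}
    (hθ : lpNorm p (θ - c) ≤ R) (ha : lpNorm q (atil - a) ≤ ε) :
    |a ⬝ᵥ θ| ≤ |atil ⬝ᵥ c| + ε * lpNorm qstar c + R * lpNorm pstar atil
      + (N : ℝ) ^ max (1 - (1 / p).toReal - (1 / q).toReal) 0 * R * ε := by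
  set d := θ - c
  set e := atil - a
  set C := (N : ℝ) ^ max (1 - (1 / p).toReal - (1 / q).toReal) 0
  have hε : 0 ≤ ε := (lpNorm.nonneg q e).trans ha
  have hC : 0 ≤ C := by positivity
  have hsplit : a ⬝ᵥ θ = atil ⬝ᵥ c + atil ⬝ᵥ d - e ⬝ᵥ c - e ⬝ᵥ d := by
    simp only [d, e, dotProduct_sub, sub_dotProduct]
    ring
  have hd : lpNorm qstar d ≤ C * R := by
    have hcmp := lpNorm.le_card_rpow_mul (ENNReal.HolderConjugate.ne_zero qstar q)
      (ENNReal.HolderConjugate.ne_zero p pstar) d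
    rw [ENNReal.HolderConjugate.toReal_inv_eq_one_sub q qstar, sub_right_comm, ← one_div,
      ← one_div] at hcmp
    exact hcmp.trans (by gcongr)
  have h_atil_d : |atil ⬝ᵥ d| ≤ R * lpNorm pstar atil :=
    calc |atil ⬝ᵥ d| ≤ lpNorm pstar atil * lpNorm p d := lpNorm.abs_dotProduct_le atil d
      _ ≤ lpNorm pstar atil * R := by gcongr; exact lpNorm.nonneg _ _
      _ = R * lpNorm pstar atil := mul_comm _ _
  have h_e_c : |e ⬝ᵥ c| ≤ ε * lpNorm qstar c :=
    (lpNorm.abs_dotProduct_le e c).trans (by gcongr; exact lpNorm.nonneg _ _)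
  have h_e_d : |e ⬝ᵥ d| ≤ C * R * ε := by
    calc |e ⬝ᵥ d| ≤ lpNorm q e * lpNorm qstar d := lpNorm.abs_dotProduct_le e d
      _ ≤ ε * (C * R) := by gcongr; exact lpNorm.nonneg _ _
      _ = C * R * ε := mul_comm _ _
  rw [hsplit]
  linarith [abs_sub (atil ⬝ᵥ c + atil ⬝ᵥ d - e ⬝ᵥ c) (e ⬝ᵥ d),
    abs_sub (atil ⬝ᵥ c + atil ⬝ᵥ d) (e ⬝ᵥ c), abs_add_le (atil ⬝ᵥ c) (atil ⬝ᵥ d)]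

theorem stable_screening_ball_zone_general (N K : ℕ)
    (A : Matrix (Fin N) (Fin K) ℝ) (y : Fin N → ℝ) (lam : ℝ) (hlam : 0 < lam)
    (xstar : Fin K → ℝ)
    (hmin : ∀ x : Fin K → ℝ, lassoPrimal A y lam xstar ≤ lassoPrimal A y lam x)
    (p pstar q qstar : ℝ≥0∞)
    (hpconj : 1 / p + 1 / pstar = 1) (hqconj : 1 / q + 1 / qstar = 1)
    (c : Fin N → ℝ) (R : ℝ)
    (hsafe : lpNorm p (lam⁻¹ • (y - A *ᵥ xstar) - c) ≤ R)
    (j : Fin K) (atil : Fin N → ℝ) (ε : ℝ)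
    (herr : lpNorm q (atil - fun i => A i j) ≤ ε)
    (htest : |atil ⬝ᵥ c| + ε * lpNorm qstar c + R * lpNorm pstar atil
      + (N : ℝ) ^ max (1 - (1 / p).toReal - (1 / q).toReal) 0 * R * ε < 1) :
    xstar j = 0 := by
  by_contra hj
  have : p.HolderConjugate pstar := .of_one_div_add_one_div hpconj
  have : q.HolderConjugate qstar := .of_one_div_add_one_div hqconj
  have hdual : |A.col j ⬝ᵥ (lam⁻¹ • (y - A *ᵥ xstar))| = 1 := by
    rw [dotProduct_smul, col_dotProduct_residual_eq_of_isMinimizer hmin hj, smul_eq_mul,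
      inv_mul_cancel_left₀ hlam.ne']
    rcases Ne.lt_or_gt hj with h | h <;> simp [h]
  have := abs_dotProduct_le_of_lpNorm_sub_le (pstar := pstar) (qstar := qstar) (a := A.col j)
    hsafe herr
  linarith

/-- Stable screening, ball-zone version: if `θ* = (y − Ax*)/λ ∈ B_p(c, R)`,
`‖ã_j − a_j‖_q ≤ ε`, and
`|ã_jᵀc| + ε‖c‖_{q*} + R‖ã_j‖_{p*} + C_{p,q} R ε < 1` with
`C_{p,q} = N^{(1 − 1/p − 1/q)₊}`, then `x*(j) = 0`. -/
theorem stable_screening_ball_zone (N K : ℕ) (hN : 0 < N)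
    (A : Matrix (Fin N) (Fin K) ℝ) (y : Fin N → ℝ) (lam : ℝ) (hlam : 0 < lam)
    (xstar : Fin K → ℝ)
    (hmin : ∀ x : Fin K → ℝ, lassoPrimal A y lam xstar ≤ lassoPrimal A y lam x)
    (p pstar q qstar : ℝ≥0∞) (hp : 1 ≤ p) (hq : 1 ≤ q)
    (hpconj : 1 / p + 1 / pstar = 1) (hqconj : 1 / q + 1 / qstar = 1)
    (c : Fin N → ℝ) (R : ℝ) (hR : 0 ≤ R)
    (hsafe : lpNorm p (lam⁻¹ • (y - A *ᵥ xstar) - c) ≤ R)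
    (j : Fin K) (atil : Fin N → ℝ) (ε : ℝ)
    (herr : lpNorm q (atil - fun i => A i j) ≤ ε)
    (htest : |atil ⬝ᵥ c| + ε * lpNorm qstar c + R * lpNorm pstar atil
      + (N : ℝ) ^ max (1 - (1 / p).toReal - (1 / q).toReal) 0 * R * ε < 1) :
    xstar j = 0 :=
  stable_screening_ball_zone_general N K A y lam hlam xstar hmin p pstar q qstar hpconj hqconj c R
    hsafe j atil ε herr htest
end

section
/- (Basic safe sphere.) Let A ∈ ℝ^{N×K}, y ∈ ℝ^N, λ > 0, and let x* ∈ ℝ^K minimize the Lasso primal objective P(x|A) = ½‖Ax − y‖₂² + λ‖x‖₁ over ℝ^K; set θ* = (y − Ax*)/λ. Then for every θ_F ∈ Δ_A = {θ ∈ ℝ^N : ‖Aᵀθ‖_∞ ≤ 1}, one has ‖θ* − y/λ‖₂ ≤ ‖θ_F − y/λ‖₂; i.e., θ* lies in the Euclidean ball B(y/λ, ‖θ_F − y/λ‖₂). -/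
open scoped ENNReal
open Matrix

lemma lp2_eq {N : ℕ} (v : Fin N → ℝ) :
    lpNorm 2 v = Real.sqrt (∑ i, v i ^ 2) := by
  have h2 : ((2:ℝ≥0∞)) ≠ ∞ := by norm_num
  simp only [lpNorm, if_neg h2]
  have ht : (2:ℝ≥0∞).toReal = 2 := by norm_num
  rw [ht, Real.sqrt_eq_rpow]
  congr 1
  refine Finset.sum_congr rfl fun i _ => ?_
  rw [show ((2:ℝ)) = ((2:ℕ):ℝ) by norm_num, Real.rpow_natCast]
  simp [sq_abs]

lemma lp2_sq {N : ℕ} (v : Fin N → ℝ) :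
    (lpNorm 2 v) ^ 2 = ∑ i, v i ^ 2 := by
  rw [lp2_eq, Real.sq_sqrt (Finset.sum_nonneg fun i _ => sq_nonneg _)]

lemma lp1_eq {K : ℕ} (x : Fin K → ℝ) : lpNorm 1 x = ∑ i, |x i| := by
  have h1 : ((1:ℝ≥0∞)) ≠ ∞ := by norm_num
  simp only [lpNorm, if_neg h1]
  norm_num

/-- Basic safe sphere: the dual optimal point `θ* = (y − Ax*)/λ` satisfies
`‖θ* − y/λ‖₂ ≤ ‖θ_F − y/λ‖₂` for every dual feasible `θ_F ∈ Δ_A`. -/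
theorem basic_safe_sphere (N K : ℕ) (A : Matrix (Fin N) (Fin K) ℝ)
    (y : Fin N → ℝ) (lam : ℝ) (hlam : 0 < lam) (xstar : Fin K → ℝ)
    (hmin : ∀ x : Fin K → ℝ, lassoPrimal A y lam xstar ≤ lassoPrimal A y lam x)
    (θF : Fin N → ℝ) (hθF : lpNorm ∞ (Aᵀ *ᵥ θF) ≤ 1) :
    lpNorm 2 (lam⁻¹ • (y - A *ᵥ xstar) - lam⁻¹ • y)
      ≤ lpNorm 2 (θF - lam⁻¹ • y) := by
  set v := A *ᵥ xstar with hv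
  set L := ∑ j, |xstar j| with hLdef
  set Sv := ∑ i, v i ^ 2 with hSvdef
  have hSv : (0:ℝ) ≤ Sv := Finset.sum_nonneg fun i _ => sq_nonneg _
  -- Step 1: optimality condition (one-sided): D := Sv - ⟨v,y⟩ + λL ≤ 0
  have hstep : ∀ ε : ℝ, 0 < ε → ε < 1 →
      Sv - (∑ i, v i * y i) + lam * L ≤ ε/2 * Sv := by
    intro ε hε0 hε1
    have h := hmin ((1 - ε) • xstar)
    have hAx : A *ᵥ ((1 - ε) • xstar) = (1 - ε) • v := by
      rw [hv, Matrix.mulVec_smul]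
    have hl1 : lpNorm 1 ((1 - ε) • xstar) = (1 - ε) * L := by
      rw [lp1_eq, hLdef, Finset.mul_sum]
      refine Finset.sum_congr rfl fun j _ => ?_
      rw [Pi.smul_apply, smul_eq_mul, abs_mul, abs_of_nonneg (by linarith : (0:ℝ) ≤ 1 - ε)]
    simp only [lassoPrimal, hAx, lp2_sq, lp1_eq] at h
    have hexp : ∑ i, (((1 - ε) • v - y) i) ^ 2
        = (∑ i, ((v - y) i) ^ 2) + ((ε^2 - 2*ε) * Sv + 2*ε*(∑ i, v i * y i)) := by
      rw [hSvdef, Finset.mul_sum, Finset.mul_sum, ← Finset.sum_add_distrib,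
        ← Finset.sum_add_distrib]
      refine Finset.sum_congr rfl fun i _ => ?_
      simp only [Pi.sub_apply, Pi.smul_apply, smul_eq_mul]
      ring
    rw [hexp] at h
    have hl1' : ∑ j, |((1 - ε) • xstar) j| = (1 - ε) * L := by
      rw [← lp1_eq, hl1]
    rw [hl1'] at h
    have hL' : ∑ j, |xstar j| = L := rfl
    rw [hL'] at h
    -- h : ½ S(v-y) + λL ≤ ½ (S(v-y) + (ε²-2ε)Sv + 2ε⟨v,y⟩) + λ(1-ε)L
    have key : ε * (Sv - (∑ i, v i * y i) + lam * L) ≤ ε * (ε/2 * Sv) := by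
      nlinarith [h]
    exact le_of_mul_le_mul_left key hε0
  have hD : Sv - (∑ i, v i * y i) + lam * L ≤ 0 := by
    by_contra hpos
    push_neg at hpos
    set D := Sv - (∑ i, v i * y i) + lam * L with hDdef
    set ε := min (1/2 : ℝ) (D / (Sv + 1)) with hεdef
    have hε0 : 0 < ε := lt_min (by norm_num) (div_pos hpos (by linarith))
    have hε1 : ε < 1 := lt_of_le_of_lt (min_le_left _ _) (by norm_num)
    have h2 := hstep ε hε0 hε1
    have h3 : ε * (Sv + 1) ≤ D := by
      have := min_le_right (1/2 : ℝ) (D / (Sv + 1))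
      calc ε * (Sv + 1) ≤ (D / (Sv + 1)) * (Sv + 1) :=
            mul_le_mul_of_nonneg_right this (by linarith)
        _ = D := by field_simp
    nlinarith [mul_nonneg hε0.le hSv]
  -- Step 2: dual feasibility bound: ⟨θF, v⟩ ≤ L
  have hinf : ∀ j, |(Aᵀ *ᵥ θF) j| ≤ 1 := by
    intro j
    refine le_trans ?_ hθF
    have hinfty : lpNorm ∞ (Aᵀ *ᵥ θF) = ⨆ j, |(Aᵀ *ᵥ θF) j| := by
      simp [lpNorm]
    rw [hinfty]
    exact le_ciSup (f := fun j => |(Aᵀ *ᵥ θF) j|) (Set.Finite.bddAbove (Set.finite_range _)) j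
  have hdot : ∑ j, (Aᵀ *ᵥ θF) j * xstar j = ∑ i, θF i * v i := by
    have h1 : (Aᵀ *ᵥ θF) ⬝ᵥ xstar = θF ⬝ᵥ (A *ᵥ xstar) := by
      rw [Matrix.mulVec_transpose, ← Matrix.dotProduct_mulVec]
    simpa [dotProduct, hv] using h1
  have hbound : ∑ i, θF i * v i ≤ L := by
    rw [← hdot, hLdef]
    refine Finset.sum_le_sum fun j _ => ?_
    calc (Aᵀ *ᵥ θF) j * xstar j ≤ |(Aᵀ *ᵥ θF) j * xstar j| := le_abs_self _
      _ = |(Aᵀ *ᵥ θF) j| * |xstar j| := abs_mul _ _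
      _ ≤ 1 * |xstar j| := mul_le_mul_of_nonneg_right (hinf j) (abs_nonneg _)
      _ = |xstar j| := one_mul _
  -- Step 3: main inequality Sv ≤ ∑ (λ θF − y)²
  have hmain : Sv ≤ ∑ i, (lam * θF i - y i) ^ 2 := by
    have hsqpos : (0:ℝ) ≤ ∑ i, (lam * θF i - y i + v i) ^ 2 :=
      Finset.sum_nonneg fun i _ => sq_nonneg _
    have hexp2 : ∑ i, (lam * θF i - y i + v i) ^ 2
        = (∑ i, (lam * θF i - y i) ^ 2)
          + (2*lam*(∑ i, θF i * v i) - 2*(∑ i, v i * y i) + Sv) := by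
      rw [hSvdef, Finset.mul_sum, Finset.mul_sum, ← Finset.sum_sub_distrib,
        ← Finset.sum_add_distrib, ← Finset.sum_add_distrib]
      refine Finset.sum_congr rfl fun i _ => ?_
      ring
    have hfeas : lam * (∑ i, θF i * v i) ≤ lam * L :=
      mul_le_mul_of_nonneg_left hbound hlam.le
    linarith [hsqpos, hexp2 ▸ hsqpos]
  -- Conclusion
  rw [lp2_eq, lp2_eq]
  apply Real.sqrt_le_sqrt
  have l1 : ∑ i, ((lam⁻¹ • (y - v) - lam⁻¹ • y) i) ^ 2 = lam⁻¹ ^ 2 * Sv := by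
    rw [hSvdef, Finset.mul_sum]
    refine Finset.sum_congr rfl fun i _ => ?_
    simp only [Pi.sub_apply, Pi.smul_apply, smul_eq_mul]
    ring
  have l2 : ∑ i, ((θF - lam⁻¹ • y) i) ^ 2
      = lam⁻¹ ^ 2 * ∑ i, (lam * θF i - y i) ^ 2 := by
    rw [Finset.mul_sum]
    refine Finset.sum_congr rfl fun i _ => ?_
    simp only [Pi.sub_apply, Pi.smul_apply, smul_eq_mul]
    field_simp
  rw [l1, l2]
  exact mul_le_mul_of_nonneg_left hmain (by positivity)
end

section
/- (GAP Safe sphere.) Let A ∈ ℝ^{N×K}, y ∈ ℝ^N, λ > 0, and let x* ∈ ℝ^K minimize the Lasso primal objective P(x|A) over ℝ^K; set θ* = (y − Ax*)/λ. Then for every x ∈ ℝ^K and every θ ∈ Δ_A = {θ ∈ ℝ^N : ‖Aᵀθ‖_∞ ≤ 1}, one has ‖θ* − θ‖₂ ≤ (1/λ)·√(2 G(x, θ|A)), where G(x, θ|A) = P(x|A) − D(θ) is the duality gap. -/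
open scoped ENNReal
open Matrix

lemma lpNorm_two {n : ℕ} (v : Fin n → ℝ) :
    lpNorm 2 v = Real.sqrt (∑ i, v i ^ 2) := by
  have h2 : ((2 : ℝ≥0∞)).toReal = 2 := by simp
  simp only [lpNorm, if_neg (by simp : (2 : ℝ≥0∞) ≠ ∞), h2]
  rw [Real.sqrt_eq_rpow]
  congr 1
  refine Finset.sum_congr rfl fun i _ => ?_
  rw [show ((2 : ℝ)) = ((2 : ℕ) : ℝ) by norm_num, Real.rpow_natCast, sq_abs]

lemma lpNorm_two_sq {n : ℕ} (v : Fin n → ℝ) :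
    lpNorm 2 v ^ 2 = ∑ i, v i ^ 2 := by
  rw [lpNorm_two, Real.sq_sqrt (by positivity)]

lemma lpNorm_one {n : ℕ} (v : Fin n → ℝ) :
    lpNorm 1 v = ∑ i, |v i| := by
  simp [lpNorm]

/-- GAP Safe sphere: for every `x ∈ ℝ^K` and every dual feasible `θ ∈ Δ_A`,
the dual optimal point `θ* = (y − Ax*)/λ` satisfies
`‖θ* − θ‖₂ ≤ (1/λ)√(2 G(x, θ|A))` where `G(x, θ|A) = P(x|A) − D(θ)`. -/
theorem gap_safe_sphere (N K : ℕ) (A : Matrix (Fin N) (Fin K) ℝ)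
    (y : Fin N → ℝ) (lam : ℝ) (hlam : 0 < lam) (xstar : Fin K → ℝ)
    (hmin : ∀ x : Fin K → ℝ, lassoPrimal A y lam xstar ≤ lassoPrimal A y lam x)
    (x : Fin K → ℝ) (θ : Fin N → ℝ) (hθ : lpNorm ∞ (Aᵀ *ᵥ θ) ≤ 1) :
    lpNorm 2 (lam⁻¹ • (y - A *ᵥ xstar) - θ)
      ≤ (1 / lam) * Real.sqrt (2 * (lassoPrimal A y lam x - lassoDual y lam θ)) := by
  set b : Fin N → ℝ := A *ᵥ xstar with hb
  -- feasibility gives pointwise bound on Aᵀθ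
  have hsup : ∀ k, |(Aᵀ *ᵥ θ) k| ≤ 1 := by
    intro k
    have h1 : (⨆ i, |(Aᵀ *ᵥ θ) i|) ≤ 1 := by simpa [lpNorm] using hθ
    exact le_trans (le_ciSup (f := fun i => |(Aᵀ *ᵥ θ) i|) (Finite.bddAbove_range _) k) h1
  -- dot product identity
  have hdot : ∑ j, b j * θ j = ∑ k, xstar k * ((Aᵀ *ᵥ θ) k) := by
    simp only [hb, Matrix.mulVec, dotProduct, Matrix.transpose_apply,
      Finset.sum_mul, Finset.mul_sum]
    rw [Finset.sum_comm]
    exact Finset.sum_congr rfl fun k _ => Finset.sum_congr rfl fun j _ => by ring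
  -- Hölder
  have hholder : ∑ j, b j * θ j ≤ ∑ k, |xstar k| := by
    rw [hdot]
    refine Finset.sum_le_sum fun k _ => ?_
    calc xstar k * (Aᵀ *ᵥ θ) k ≤ |xstar k * (Aᵀ *ᵥ θ) k| := le_abs_self _
      _ = |xstar k| * |(Aᵀ *ᵥ θ) k| := abs_mul _ _
      _ ≤ |xstar k| * 1 := by
          exact mul_le_mul_of_nonneg_left (hsup k) (abs_nonneg _)
      _ = |xstar k| := mul_one _
  -- lower bound on primal at x
  have hPx : (1 / 2) * ∑ j, (y j - b j) ^ 2 + lam * ∑ j, b j * θ j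
      ≤ lassoPrimal A y lam x := by
    refine le_trans ?_ (hmin x)
    unfold lassoPrimal
    rw [lpNorm_two_sq, lpNorm_one]
    have h1 : ∑ j, ((A *ᵥ xstar - y) j) ^ 2 = ∑ j, (y j - b j) ^ 2 := by
      refine Finset.sum_congr rfl fun j _ => ?_
      simp only [Pi.sub_apply, hb]
      ring
    rw [h1]
    have := mul_le_mul_of_nonneg_left hholder hlam.le
    linarith
  -- dual as sums
  have hD : lassoDual y lam θ
      = (1 / 2) * ∑ j, (y j) ^ 2 - (lam ^ 2 / 2) * ∑ j, (θ j - lam⁻¹ * y j) ^ 2 := by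
    unfold lassoDual
    rw [lpNorm_two_sq, lpNorm_two_sq]
    simp [Pi.sub_apply, Pi.smul_apply, smul_eq_mul]
  -- expansions
  have E1 : lam ^ 2 * ∑ j, ((lam⁻¹ • (y - b) - θ) j) ^ 2
      = (∑ j, (y j - b j) ^ 2) - (2 * lam) * ((∑ j, y j * θ j) - ∑ j, b j * θ j)
        + lam ^ 2 * ∑ j, (θ j) ^ 2 := by
    rw [Finset.mul_sum]
    have h1 : ∀ j, lam ^ 2 * ((lam⁻¹ • (y - b) - θ) j) ^ 2
        = (y j - b j) ^ 2 - (2 * lam) * (y j * θ j - b j * θ j)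
          + lam ^ 2 * (θ j) ^ 2 := by
      intro j
      simp only [Pi.sub_apply, Pi.smul_apply, smul_eq_mul]
      field_simp
      ring
    rw [Finset.sum_congr rfl fun j _ => h1 j]
    rw [Finset.sum_add_distrib, Finset.sum_sub_distrib, ← Finset.mul_sum,
      ← Finset.mul_sum, Finset.sum_sub_distrib]
  have E2 : lam ^ 2 * ∑ j, (θ j - lam⁻¹ * y j) ^ 2
      = lam ^ 2 * (∑ j, (θ j) ^ 2) - (2 * lam) * (∑ j, y j * θ j)
        + ∑ j, (y j) ^ 2 := by
    rw [Finset.mul_sum]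
    have h1 : ∀ j, lam ^ 2 * (θ j - lam⁻¹ * y j) ^ 2
        = lam ^ 2 * (θ j) ^ 2 - (2 * lam) * (y j * θ j) + (y j) ^ 2 := by
      intro j
      field_simp
      ring
    rw [Finset.sum_congr rfl fun j _ => h1 j]
    rw [Finset.sum_add_distrib, Finset.sum_sub_distrib, ← Finset.mul_sum,
      ← Finset.mul_sum]
  -- key inequality
  have hgap : lam ^ 2 * ∑ j, ((lam⁻¹ • (y - b) - θ) j) ^ 2
      ≤ 2 * (lassoPrimal A y lam x - lassoDual y lam θ) := by
    rw [E1]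
    have h2 : 2 * lassoDual y lam θ
        = ∑ j, (y j) ^ 2 - (lam ^ 2 * ∑ j, (θ j - lam⁻¹ * y j) ^ 2) := by
      rw [hD]; ring
    linarith [hPx, E2, h2]
  -- conclude
  rw [lpNorm_two]
  have hs : Real.sqrt (∑ j, ((lam⁻¹ • (y - b) - θ) j) ^ 2)
      = (1 / lam) * Real.sqrt (lam ^ 2 * ∑ j, ((lam⁻¹ • (y - b) - θ) j) ^ 2) := by
    rw [Real.sqrt_mul (by positivity), Real.sqrt_sq hlam.le]
    field_simp
  rw [hs]
  exact mul_le_mul_of_nonneg_left (Real.sqrt_le_sqrt hgap) (by positivity)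
end
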